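/- Let n ≥ 2 and let B = x eₙ* + eₙ y* ∈ Mₙ(ℂ) have nonzero entries at positions (1,n), (n,1) and (n,n). Then the two nonzero singular values of B are distinct, i.e., σ₁(B) > σ₂(B) > 0. -/

import Mathlib

/-!
Since `eₙ` has zero first coordinate, `B₁₁ = 0` while the first row and the first column of `B`
are supported in position `n`. If `σ₂ = 0`, then `B` has rank one, so its `2 × 2` minor on rows
and columns `{1, n}` vanishes: `B₁ₙ Bₙ₁ = B₁₁ Bₙₙ = 0`. If `σ₁ = σ₂ = σ`, then `B` is `σ` times a
partial isometry, so `B Bᴴ B = σ² B`; but the `(1, 1)` entry of `B Bᴴ B` is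
`B₁ₙ · conj Bₙₙ · Bₙ₁ ≠ 0`, whereas that of `σ² B` is `0`.
-/

open Matrix

/-- The operator (spectral) norm of a complex matrix, induced by the Euclidean norm on `ℂⁿ`. -/
noncomputable def opNorm {n : ℕ} (A : Matrix (Fin n) (Fin n) ℂ) : ℝ :=
  ‖Matrix.toEuclideanCLM (𝕜 := ℂ) (n := Fin n) A‖

/-- Birkhoff–James orthogonality of matrices with respect to the operator norm. -/
def BJ {n : ℕ} (A B : Matrix (Fin n) (Fin n) ℂ) : Prop :=
  ∀ c : ℂ, opNorm A ≤ opNorm (A + c • B)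

namespace Matrix

variable {m n α : Type*}

theorem vecMulVec_apply_mul_vecMulVec_apply [CommSemigroup α] (u : m → α) (v : n → α)
    (i k : m) (j l : n) :
    vecMulVec u v i j * vecMulVec u v k l = vecMulVec u v i l * vecMulVec u v k j := by
  simp only [vecMulVec_apply]
  ac_rfl

theorem vecMulVec_single_add_vecMulVec_single_apply_of_ne [DecidableEq n] [Semiring α]
    [StarRing α] (x y : n → α) {c i j : n} (hi : i ≠ c) (hj : j ≠ c) :
    (vecMulVec x (star (Pi.single c 1)) + vecMulVec (Pi.single c 1) (star y)) i j = 0 := by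
  simp [vecMulVec_apply, hi, hj]

theorem mul_conjTranspose_mul_apply_of_eq_zero [Fintype m] [NonUnitalSemiring α] [StarRing α]
    {A : Matrix m m α} {i c : m} (hrow : ∀ j, j ≠ c → A i j = 0)
    (hcol : ∀ k, k ≠ c → A k i = 0) :
    (A * Aᴴ * A) i i = A i c * star (A c c) * A c i := by
  rw [mul_apply, Finset.sum_eq_single c (fun k _ hk => by rw [hcol k hk, mul_zero]) (by simp),
    mul_apply, Finset.sum_eq_single c (fun j _ hj => by rw [hrow j hj, zero_mul]) (by simp),
    conjTranspose_apply]

section Orthonormal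

variable [Fintype m] [Fintype n] [CommSemiring α] [StarRing α]

theorem star_dotProduct_eq_zero_comm {v w : n → α} (h : star v ⬝ᵥ w = 0) :
    star w ⬝ᵥ v = 0 := by
  rw [star_dotProduct, h, star_zero]

theorem vecMulVec_add_vecMulVec_mul_conjTranspose_mul {u₁ u₂ : m → α} {v₁ v₂ : n → α}
    (hu₁ : star u₁ ⬝ᵥ u₁ = 1) (hu₂ : star u₂ ⬝ᵥ u₂ = 1) (hu₁₂ : star u₁ ⬝ᵥ u₂ = 0)
    (hv₁ : star v₁ ⬝ᵥ v₁ = 1) (hv₂ : star v₂ ⬝ᵥ v₂ = 1) (hv₁₂ : star v₁ ⬝ᵥ v₂ = 0) :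
    (vecMulVec u₁ (star v₁) + vecMulVec u₂ (star v₂)) *
        (vecMulVec u₁ (star v₁) + vecMulVec u₂ (star v₂))ᴴ *
        (vecMulVec u₁ (star v₁) + vecMulVec u₂ (star v₂)) =
      vecMulVec u₁ (star v₁) + vecMulVec u₂ (star v₂) := by
  simp only [conjTranspose_add, conjTranspose_vecMulVec, star_star, Matrix.add_mul,
    Matrix.mul_add, vecMulVec_mul_vecMulVec, vecMulVec_smul, Matrix.smul_mul, smul_smul]
  simp only [hu₁, hu₂, hu₁₂, star_dotProduct_eq_zero_comm hu₁₂, hv₁, hv₂, hv₁₂,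
    star_dotProduct_eq_zero_comm hv₁₂, mul_one, mul_zero, one_smul, zero_smul, add_zero, zero_add]

end Orthonormal

end Matrix

theorem stmt4 {n : ℕ} (hn : 2 ≤ n) (x y : Fin n → ℂ)
    (B : Matrix (Fin n) (Fin n) ℂ)
    (hB : B = Matrix.vecMulVec x (star (Pi.single (⟨n - 1, by omega⟩ : Fin n) 1)) +
          Matrix.vecMulVec (Pi.single (⟨n - 1, by omega⟩ : Fin n) 1) (star y))
    (h1n : B ⟨0, by omega⟩ ⟨n - 1, by omega⟩ ≠ 0)
    (hn1 : B ⟨n - 1, by omega⟩ ⟨0, by omega⟩ ≠ 0)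
    (hnn : B ⟨n - 1, by omega⟩ ⟨n - 1, by omega⟩ ≠ 0)
    (σ₁ σ₂ : ℝ) (u₁ u₂ v₁ v₂ : Fin n → ℂ)
    (hu₁ : dotProduct (star u₁) u₁ = 1)
    (hu₂ : dotProduct (star u₂) u₂ = 1)
    (hu₁₂ : dotProduct (star u₁) u₂ = 0)
    (hv₁ : dotProduct (star v₁) v₁ = 1)
    (hv₂ : dotProduct (star v₂) v₂ = 1)
    (hv₁₂ : dotProduct (star v₁) v₂ = 0)
    (hσ : σ₂ ≤ σ₁) (hσ₂ : 0 ≤ σ₂)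
    (hSVD : B = (σ₁ : ℂ) • Matrix.vecMulVec u₁ (star v₁) +
          (σ₂ : ℂ) • Matrix.vecMulVec u₂ (star v₂)) :
    0 < σ₂ ∧ σ₂ < σ₁ := by
  set c : Fin n := ⟨n - 1, by omega⟩
  set i : Fin n := ⟨0, by omega⟩
  have hic : i ≠ c := by simp only [ne_eq, Fin.ext_iff, c, i]; omega
  have hB0 : ∀ k j, k ≠ c → j ≠ c → B k j = 0 := fun k j hk hj => by
    rw [hB]; exact vecMulVec_single_add_vecMulVec_single_apply_of_ne x y hk hj
  refine ⟨hσ₂.lt_of_ne' ?_, hσ.lt_of_ne ?_⟩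
  · intro hσ₂0
    have hrank : B = vecMulVec ((σ₁ : ℂ) • u₁) (star v₁) := by
      rw [hSVD, hσ₂0, Complex.ofReal_zero, zero_smul, add_zero, smul_vecMulVec]
    have hminor := vecMulVec_apply_mul_vecMulVec_apply ((σ₁ : ℂ) • u₁) (star v₁) i c c i
    rw [← hrank, hB0 i i hic hic, zero_mul] at hminor
    exact mul_ne_zero h1n hn1 hminor
  · intro hσeq
    have hcube : B * Bᴴ * B = ((σ₁ : ℂ) * star (σ₁ : ℂ)) • B := by
      have hW := vecMulVec_add_vecMulVec_mul_conjTranspose_mul hu₁ hu₂ hu₁₂ hv₁ hv₂ hv₁₂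
      rw [hSVD, hσeq, ← smul_add]
      simp only [conjTranspose_smul, Matrix.smul_mul, Matrix.mul_smul, smul_smul, hW]
      ring_nf
    have hii := congrFun (congrFun hcube i) i
    rw [mul_conjTranspose_mul_apply_of_eq_zero (fun j hj => hB0 i j hic hj)
      (fun k hk => hB0 k i hk hic), Matrix.smul_apply, hB0 i i hic hic, smul_zero] at hii
    exact mul_ne_zero (mul_ne_zero h1n (star_ne_zero.2 hnn)) hn1 hii
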